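/- arXiv:1102.2171 — 3 statements merged into one kernel-verified Lean document; each statement's English description precedes it below -/
import Mathlib

section
/- Let μ be a probability distribution on the nonnegative integers with μ_odd > 0. Then for all x ∈ [-1, 0), (1 + G_μ(x))/(1 - G_μ(x)) ≤ 2/μ_odd. -/
/-! For `x ∈ [-1, 0)` the odd terms of `G_μ(x)` are nonpositive and the even ones are at most their
weights, so `-1 ≤ G_μ(x) ≤ 1 - μ_odd`. Hence the numerator `1 + G_μ(x)` is at most `2` and the
denominator `1 - G_μ(x)` is at least `μ_odd`. -/

open Set

lemma abs_mul_pow_le_of_abs_le_one {a x : ℝ} (ha : 0 ≤ a) (hx : |x| ≤ 1) (k : ℕ) :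
    |a * x ^ k| ≤ a := by
  rw [abs_mul, abs_of_nonneg ha, abs_pow]
  exact mul_le_of_le_one_right ha (pow_le_one₀ (abs_nonneg x) hx)

lemma mul_pow_le_ite_odd {a x : ℝ} (ha : 0 ≤ a) (hx : x ∈ Icc (-1 : ℝ) 0) (k : ℕ) :
    a * x ^ k ≤ if Odd k then 0 else a := by
  split_ifs with hk
  · exact mul_nonpos_of_nonneg_of_nonpos ha (hk.pow_nonpos hx.2)
  · exact (le_abs_self _).trans
      (abs_mul_pow_le_of_abs_le_one ha (abs_le.2 ⟨hx.1, hx.2.trans zero_le_one⟩) k)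

section NonnegSummable

variable {μ : ℕ → ℝ}

lemma summable_mul_pow_of_abs_le_one (hpos : ∀ k, 0 ≤ μ k) (hμ : Summable μ)
    {x : ℝ} (hx : |x| ≤ 1) :
    Summable fun k => μ k * x ^ k :=
  hμ.of_norm_bounded fun k => abs_mul_pow_le_of_abs_le_one (hpos k) hx k

lemma neg_tsum_le_tsum_mul_pow (hpos : ∀ k, 0 ≤ μ k) (hμ : Summable μ)
    {x : ℝ} (hx : |x| ≤ 1) :
    -∑' k, μ k ≤ ∑' k, μ k * x ^ k := by
  rw [← tsum_neg]
  exact hμ.neg.tsum_le_tsum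
    (fun k => neg_le_of_abs_le (abs_mul_pow_le_of_abs_le_one (hpos k) hx k))
    (summable_mul_pow_of_abs_le_one hpos hμ hx)

lemma tsum_mul_pow_le_tsum_sub_tsum_odd (hpos : ∀ k, 0 ≤ μ k) (hμ : Summable μ)
    {x : ℝ} (hx : x ∈ Icc (-1 : ℝ) 0) :
    ∑' k, μ k * x ^ k ≤ ∑' k, μ k - ∑' k, (if Odd k then μ k else 0) := by
  have hμodd : Summable fun k => if Odd k then μ k else 0 :=
    hμ.of_nonneg_of_le (fun k => by split_ifs <;> simp [hpos k])
      (fun k => by split_ifs <;> simp [hpos k])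
  have hxabs : |x| ≤ 1 := abs_le.2 ⟨hx.1, hx.2.trans zero_le_one⟩
  rw [← hμ.tsum_sub hμodd]
  refine (summable_mul_pow_of_abs_le_one hpos hμ hxabs).tsum_le_tsum (fun k => ?_) (hμ.sub hμodd)
  exact (mul_pow_le_ite_odd (hpos k) hx k).trans_eq (by split_ifs <;> simp)

end NonnegSummable

theorem stmt_4 (μ : ℕ → ℝ) (hpos : ∀ k, 0 ≤ μ k) (hsum : ∑' k, μ k = 1)
    (hodd : 0 < ∑' k, (if Odd k then μ k else 0))
    (x : ℝ) (hx : x ∈ Set.Ico (-1 : ℝ) 0) :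
    (1 + ∑' k, μ k * x ^ k) / (1 - ∑' k, μ k * x ^ k)
      ≤ 2 / ∑' k, (if Odd k then μ k else 0) := by
  have hμ : Summable μ := by
    by_contra h
    simp [tsum_eq_zero_of_not_summable h] at hsum
  have hlower := neg_tsum_le_tsum_mul_pow hpos hμ (abs_le.2 ⟨hx.1, hx.2.le.trans zero_le_one⟩)
  have hupper := tsum_mul_pow_le_tsum_sub_tsum_odd hpos hμ (Ico_subset_Icc_self hx)
  rw [hsum] at hlower hupper
  exact div_le_div₀ zero_le_two (by linarith) hodd (by linarith)
end

section
/- Let E be a finite nonnegative measure on [-1,1] with ∫ (1+x)/(1-x) dE(x) < ∞, and let μ be a probability distribution on ℕ with μ_odd > 0. Then ∫ (1 + G_μ(x))/(1 - G_μ(x)) dE(x) ≤ (2/μ_odd) E([-1,0)) + (1/(1-μ(0))) ∫_{[0,1]} 2/(1-x) dE(x) < ∞. -/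
/-!
Write `G = G_μ`. Since `1 - G(x) = ∑ μ k (1 - x ^ k)` with every term nonnegative on `[-1, 1]`,
the denominator is bounded below termwise: for `x ≤ 0` the odd terms alone give
`1 - G(x) ≥ μ_odd` (as `x ^ k ≤ 0` for odd `k`), and for `x ≥ 0` the terms with `k ≥ 1` give
`1 - G(x) ≥ (1 - μ 0)(1 - x)` (as `x ^ k ≤ x`). With `1 + G ≤ 2` this bounds the integrand on
`[-1, 0)` and on `[0, 1]`; finiteness comes from `2 / (1 - x) ≤ 2 (1 + x) / (1 - x)` on `[0, 1]`.
-/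

open MeasureTheory Set
open scoped ENNReal

noncomputable def pgf (μ : ℕ → ℝ) (x : ℝ) : ℝ := ∑' k, μ k * x ^ k

noncomputable def oddMass (μ : ℕ → ℝ) : ℝ := ∑' k, if Odd k then μ k else 0

section pgf

variable {μ : ℕ → ℝ} {x : ℝ}

lemma summable_mul_pow (hpos : ∀ k, 0 ≤ μ k) (hμ : Summable μ) (hx : |x| ≤ 1) :
    Summable fun k => μ k * x ^ k := by
  refine (hμ.of_nonneg_of_le (fun k => abs_nonneg _) fun k => ?_).of_abs
  rw [abs_mul, abs_of_nonneg (hpos k), abs_pow]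
  exact mul_le_of_le_one_right (hpos k) (pow_le_one₀ (abs_nonneg x) hx)

lemma tsum_le_one_sub_pgf (hpos : ∀ k, 0 ≤ μ k) (hμ : Summable μ) (hsum : ∑' k, μ k = 1)
    (hx : |x| ≤ 1) {c : ℕ → ℝ} (hc : Summable c) (hle : ∀ k, c k ≤ μ k * (1 - x ^ k)) :
    ∑' k, c k ≤ 1 - pgf μ x := by
  have hG := summable_mul_pow hpos hμ hx
  calc ∑' k, c k ≤ ∑' k, (μ k - μ k * x ^ k) :=
        hc.tsum_le_tsum (fun k => (hle k).trans_eq (mul_one_sub _ _)) (hμ.sub hG)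
    _ = 1 - pgf μ x := by rw [hμ.tsum_sub hG, hsum, pgf]

lemma oddMass_le_one_sub_pgf (hpos : ∀ k, 0 ≤ μ k) (hμ : Summable μ) (hsum : ∑' k, μ k = 1)
    (hx : x ∈ Icc (-1) 0) : oddMass μ ≤ 1 - pgf μ x := by
  have hx' : |x| ≤ 1 := abs_le.2 ⟨hx.1, by linarith [hx.2]⟩
  refine tsum_le_one_sub_pgf hpos hμ hsum hx'
    (hμ.of_nonneg_of_le (fun k => by split_ifs <;> simp [hpos k])
      fun k => by split_ifs <;> simp [hpos k]) fun k => ?_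
  split_ifs with hk
  · nlinarith [hk.pow_nonpos hx.2, hpos k]
  · have : x ^ k ≤ 1 := (le_abs_self _).trans (abs_pow x k ▸ pow_le_one₀ (abs_nonneg x) hx')
    nlinarith [hpos k]

lemma pgf_zero (μ : ℕ → ℝ) : pgf μ 0 = μ 0 :=
  (tsum_eq_single 0 fun k hk => by simp [hk]).trans (by simp)

lemma oddMass_le_one_sub (hpos : ∀ k, 0 ≤ μ k) (hμ : Summable μ) (hsum : ∑' k, μ k = 1) :
    oddMass μ ≤ 1 - μ 0 :=
  pgf_zero μ ▸ oddMass_le_one_sub_pgf hpos hμ hsum (by simp)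

lemma mul_one_sub_le_one_sub_pgf (hpos : ∀ k, 0 ≤ μ k) (hμ : Summable μ)
    (hsum : ∑' k, μ k = 1) (hx : x ∈ Icc 0 1) : (1 - μ 0) * (1 - x) ≤ 1 - pgf μ x := by
  have hc := hasSum_ite_sub_hasSum (hμ.mul_right (1 - x)).hasSum 0
  calc (1 - μ 0) * (1 - x) = ∑' k, if k = 0 then 0 else μ k * (1 - x) := by
        rw [hc.tsum_eq, tsum_mul_right, hsum]; ring
    _ ≤ 1 - pgf μ x := by
        refine tsum_le_one_sub_pgf hpos hμ hsum (abs_le.2 ⟨by linarith [hx.1], hx.2⟩)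
          hc.summable fun k => ?_
        rcases k with _ | k
        · simp
        · have : x ^ (k + 1) ≤ x := pow_le_of_le_one hx.1 hx.2 k.succ_ne_zero
          simp only [Nat.succ_ne_zero, if_false]
          nlinarith [hpos (k + 1)]

end pgf

lemma ofReal_one_add_div_ofReal_one_sub_le {g c : ℝ} (hc₀ : 0 ≤ c) (hc : c ≤ 1 - g) :
    ENNReal.ofReal (1 + g) / ENNReal.ofReal (1 - g) ≤ 2 / ENNReal.ofReal c := by
  refine ENNReal.div_le_div ?_ (ENNReal.ofReal_le_ofReal hc)
  rw [← ENNReal.ofReal_ofNat]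
  exact ENNReal.ofReal_le_ofReal (by linarith)

lemma two_div_ofReal_mul {a b : ℝ} (ha : 0 < a) :
    2 / ENNReal.ofReal (a * b) = ENNReal.ofReal (1 / a) * (2 / ENNReal.ofReal b) := by
  rw [ENNReal.ofReal_mul ha.le, one_div, ENNReal.ofReal_inv_of_pos ha, ENNReal.div_eq_inv_mul,
    ENNReal.div_eq_inv_mul, ENNReal.mul_inv (Or.inl (ENNReal.ofReal_pos.2 ha).ne')
      (Or.inl ENNReal.ofReal_ne_top)]
  ring

lemma lintegral_eq_setLIntegral_Ico_add_Icc {E : Measure ℝ} {a b c : ℝ} (hab : a ≤ b)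
    (hbc : b ≤ c) (hE : E (Icc a c)ᶜ = 0) (f : ℝ → ℝ≥0∞) :
    ∫⁻ x, f x ∂E = ∫⁻ x in Ico a b, f x ∂E + ∫⁻ x in Icc b c, f x ∂E := by
  rw [← lintegral_union measurableSet_Icc
      (disjoint_left.2 fun _ h₁ h₂ => h₁.2.not_ge h₂.1),
    Ico_union_Icc_eq_Icc hab hbc,
    Measure.restrict_eq_self_of_ae_mem (s := Icc a c) (mem_ae_iff.2 hE)]

lemma setLIntegral_Icc_two_div_one_sub_lt_top {E : Measure ℝ}
    (hfin : ∫⁻ x, ENNReal.ofReal (1 + x) / ENNReal.ofReal (1 - x) ∂E < ⊤) :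
    ∫⁻ x in Icc 0 1, 2 / ENNReal.ofReal (1 - x) ∂E < ⊤ := by
  have hle : ∀ x ∈ Icc (0 : ℝ) 1,
      2 / ENNReal.ofReal (1 - x) ≤ 2 * (ENNReal.ofReal (1 + x) / ENNReal.ofReal (1 - x)) :=
    fun x hx => by
      rw [← mul_div_assoc]
      refine ENNReal.div_le_div_right (le_mul_of_one_le_right' ?_) _
      rw [← ENNReal.ofReal_one]
      exact ENNReal.ofReal_le_ofReal (by linarith [hx.1])
  calc ∫⁻ x in Icc 0 1, 2 / ENNReal.ofReal (1 - x) ∂E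
      ≤ ∫⁻ x in Icc 0 1, 2 * (ENNReal.ofReal (1 + x) / ENNReal.ofReal (1 - x)) ∂E :=
        setLIntegral_mono' measurableSet_Icc hle
    _ ≤ 2 * ∫⁻ x, ENNReal.ofReal (1 + x) / ENNReal.ofReal (1 - x) ∂E := by
        rw [lintegral_const_mul' _ _ ENNReal.ofNat_ne_top]
        exact mul_le_mul_right (setLIntegral_le_lintegral _ _) 2
    _ < ⊤ := ENNReal.mul_lt_top ENNReal.ofNat_lt_top hfin

theorem stmt_9 (E : Measure ℝ) [IsFiniteMeasure E]
    (hsupp : E (Set.Icc (-1 : ℝ) 1)ᶜ = 0)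
    (hfin : ∫⁻ x, ENNReal.ofReal (1 + x) / ENNReal.ofReal (1 - x) ∂E < ⊤)
    (μ : ℕ → ℝ) (hpos : ∀ k, 0 ≤ μ k) (hsum : ∑' k, μ k = 1)
    (hodd : 0 < ∑' k, (if Odd k then μ k else 0)) :
    (∫⁻ x, ENNReal.ofReal (1 + ∑' k, μ k * x ^ k) /
        ENNReal.ofReal (1 - ∑' k, μ k * x ^ k) ∂E)
      ≤ ENNReal.ofReal (2 / ∑' k, (if Odd k then μ k else 0)) * E (Set.Ico (-1 : ℝ) 0)
        + ENNReal.ofReal (1 / (1 - μ 0)) *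
            ∫⁻ x in Set.Icc (0 : ℝ) 1, 2 / ENNReal.ofReal (1 - x) ∂E
    ∧ ENNReal.ofReal (2 / ∑' k, (if Odd k then μ k else 0)) * E (Set.Ico (-1 : ℝ) 0)
        + ENNReal.ofReal (1 / (1 - μ 0)) *
            (∫⁻ x in Set.Icc (0 : ℝ) 1, 2 / ENNReal.ofReal (1 - x) ∂E) < ⊤ := by
  have hμ : Summable μ := by
    by_contra h
    simp [tsum_eq_zero_of_not_summable h] at hsum
  have hμ0 : 0 < 1 - μ 0 := hodd.trans_le (oddMass_le_one_sub hpos hμ hsum)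
  refine ⟨?_, ENNReal.add_lt_top.2 ⟨ENNReal.mul_lt_top ENNReal.ofReal_lt_top (measure_lt_top _ _),
    ENNReal.mul_lt_top ENNReal.ofReal_lt_top (setLIntegral_Icc_two_div_one_sub_lt_top hfin)⟩⟩
  rw [lintegral_eq_setLIntegral_Ico_add_Icc (by norm_num) zero_le_one hsupp]
  gcongr ?_ + ?_
  · calc _ ≤ ∫⁻ _ in Ico (-1) 0, 2 / ENNReal.ofReal (oddMass μ) ∂E :=
          setLIntegral_mono' measurableSet_Ico fun x hx =>
            ofReal_one_add_div_ofReal_one_sub_le hodd.le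
              (oddMass_le_one_sub_pgf hpos hμ hsum (Ico_subset_Icc_self hx))
      _ = _ := by
          rw [setLIntegral_const, ENNReal.ofReal_div_of_pos hodd, ENNReal.ofReal_ofNat]; rfl
  · calc _ ≤ ∫⁻ x in Icc 0 1, 2 / ENNReal.ofReal ((1 - μ 0) * (1 - x)) ∂E :=
          setLIntegral_mono' measurableSet_Icc fun x hx =>
            ofReal_one_add_div_ofReal_one_sub_le (mul_nonneg hμ0.le (sub_nonneg.2 hx.2))
              (mul_one_sub_le_one_sub_pgf hpos hμ hsum hx)
      _ = _ := by
          simp_rw [two_div_ofReal_mul hμ0]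
          exact lintegral_const_mul' _ _ ENNReal.ofReal_ne_top
end

section
/- The kernel P(x,·) = (1-s(x))δ_{-x}(·) + s(x)U(·) on [-1,1], where s(x) = √(1-|x|) and U is the uniform distribution on [-1,1], is reversible with respect to the probability density π(x) ∝ 1/√(1-|x|) on [-1,1]. -/
open MeasureTheory ENNReal

/-- The counterexample kernel `P(x,·) = (1-s(x))δ₋ₓ + s(x)U` with `s(x)=√(1-|x|)`
and `U` the uniform distribution on `[-1,1]`, evaluated on a set `B`. -/
noncomputable def Pker (x : ℝ) (B : Set ℝ) : ℝ≥0∞ :=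
  ENNReal.ofReal (1 - Real.sqrt (1 - |x|)) * B.indicator (fun _ => 1) (-x)
    + ENNReal.ofReal (Real.sqrt (1 - |x|)) * (volume (B ∩ Set.Icc (-1 : ℝ) 1) / 2)

/-!
The flow `π(dx)P(x,dy)` splits into a reflection part and a uniform part. The reflection part
has density `π(x)(1 - s(x))` on the pairs `(x, -x)`; this density is even, so the reflection
`x ↦ -x` exchanges its masses on `A ∩ -B` and `B ∩ -A`. The uniform part has density
`π(x)s(x) = 1/4` in `x`, so it is the product measure `λ(A ∩ [-1,1]) λ(B ∩ [-1,1]) / 8`,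
which is symmetric in `A` and `B`.
-/

open Set Pointwise

theorem setLIntegral_inter_neg_comm {G : Type*} [MeasurableSpace G] [InvolutiveNeg G]
    [MeasurableNeg G] (μ : Measure G) [μ.IsNegInvariant] {g : G → ℝ≥0∞}
    (hg : ∀ x, g (-x) = g x) (S T : Set G) :
    ∫⁻ x in S ∩ -T, g x ∂μ = ∫⁻ x in T ∩ -S, g x ∂μ := by
  have hST : S ∩ -T = Neg.neg ⁻¹' (T ∩ -S) := by
    ext x; simp only [mem_inter_iff, mem_neg, mem_preimage, neg_neg, and_comm]
  calc ∫⁻ x in S ∩ -T, g x ∂μ = ∫⁻ x in Neg.neg ⁻¹' (T ∩ -S), g (-x) ∂μ := by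
        simp only [hST, hg]
    _ = ∫⁻ x in T ∩ -S, g x ∂μ :=
      (Measure.measurePreserving_neg μ).setLIntegral_comp_preimage_emb
        (MeasurableEquiv.neg G).measurableEmbedding g _

noncomputable def stationaryDensity (x : ℝ) : ℝ≥0∞ :=
  ENNReal.ofReal (1 / (4 * √(1 - |x|)))

noncomputable def reflectionDensity (x : ℝ) : ℝ≥0∞ :=
  stationaryDensity x * ENNReal.ofReal (1 - √(1 - |x|))

lemma measurable_reflectionDensity : Measurable reflectionDensity := by
  unfold reflectionDensity stationaryDensity
  fun_prop

lemma reflectionDensity_neg (x : ℝ) : reflectionDensity (-x) = reflectionDensity x := by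
  simp only [reflectionDensity, stationaryDensity, abs_neg]

lemma stationaryDensity_mul_sqrt_ae :
    ∀ᵐ x ∂volume.restrict (Icc (-1 : ℝ) 1),
      stationaryDensity x * ENNReal.ofReal √(1 - |x|) = ENNReal.ofReal (1 / 4) := by
  rw [← Measure.restrict_congr_set Ioo_ae_eq_Icc]
  filter_upwards [ae_restrict_mem measurableSet_Ioo] with x hx
  have hs : 0 < √(1 - |x|) := Real.sqrt_pos.2 (sub_pos.2 (abs_lt.2 hx))
  rw [stationaryDensity, ← ENNReal.ofReal_mul (by positivity)]
  congr 1
  field_simp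

lemma setLIntegral_stationaryDensity_mul_sqrt (T : Set ℝ) :
    ∫⁻ x in T ∩ Icc (-1 : ℝ) 1, stationaryDensity x * ENNReal.ofReal √(1 - |x|)
      = ENNReal.ofReal (1 / 4) * volume (T ∩ Icc (-1 : ℝ) 1) := by
  rw [lintegral_congr_ae (ae_restrict_of_ae_restrict_of_subset inter_subset_right
    stationaryDensity_mul_sqrt_ae), setLIntegral_const]

lemma stationaryDensity_mul_Pker (x : ℝ) (B : Set ℝ) :
    stationaryDensity x * Pker x B
      = (-B).indicator reflectionDensity x
        + stationaryDensity x * ENNReal.ofReal √(1 - |x|)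
          * (volume (B ∩ Icc (-1 : ℝ) 1) / 2) := by
  rw [Pker, mul_add, ← mul_assoc, ← mul_assoc]
  congr 1
  by_cases h : -x ∈ B <;> simp [indicator, h, reflectionDensity]

lemma setLIntegral_stationaryDensity_mul_Pker (A : Set ℝ) {B : Set ℝ} (hB : MeasurableSet B) :
    ∫⁻ x in A ∩ Icc (-1 : ℝ) 1, stationaryDensity x * Pker x B
      = (∫⁻ x in (A ∩ Icc (-1 : ℝ) 1) ∩ -(B ∩ Icc (-1 : ℝ) 1), reflectionDensity x)
        + ENNReal.ofReal (1 / 4) * volume (A ∩ Icc (-1 : ℝ) 1)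
          * (volume (B ∩ Icc (-1 : ℝ) 1) / 2) := by
  have hIcc :
      (A ∩ Icc (-1 : ℝ) 1) ∩ -(B ∩ Icc (-1 : ℝ) 1) = -B ∩ (A ∩ Icc (-1 : ℝ) 1) := by
    rw [inter_neg, neg_Icc, neg_neg]
    ext x; simp only [mem_inter_iff]; tauto
  simp only [stationaryDensity_mul_Pker]
  have hB_finite : volume (B ∩ Icc (-1 : ℝ) 1) / 2 ≠ ∞ :=
    ENNReal.div_ne_top (measure_ne_top_of_subset inter_subset_right measure_Icc_lt_top.ne)
      two_ne_zero
  rw [lintegral_add_left (measurable_reflectionDensity.indicator hB.neg),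
    lintegral_indicator hB.neg, Measure.restrict_restrict hB.neg, hIcc,
    lintegral_mul_const' _ _ hB_finite, setLIntegral_stationaryDensity_mul_sqrt]

/-- Reversibility: `π(dx)P(x,dy) = π(dy)P(y,dx)` with `π(x) = 1/(4√(1-|x|))` on `[-1,1]`. -/
theorem stmt_13 (A B : Set ℝ) (hA : MeasurableSet A) (hB : MeasurableSet B) :
    ∫⁻ x in A ∩ Set.Icc (-1 : ℝ) 1,
        ENNReal.ofReal (1 / (4 * Real.sqrt (1 - |x|))) * Pker x B ∂volume
      = ∫⁻ x in B ∩ Set.Icc (-1 : ℝ) 1,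
          ENNReal.ofReal (1 / (4 * Real.sqrt (1 - |x|))) * Pker x A ∂volume := by
  change ∫⁻ x in A ∩ Icc (-1 : ℝ) 1, stationaryDensity x * Pker x B
    = ∫⁻ x in B ∩ Icc (-1 : ℝ) 1, stationaryDensity x * Pker x A
  rw [setLIntegral_stationaryDensity_mul_Pker A hB, setLIntegral_stationaryDensity_mul_Pker B hA,
    setLIntegral_inter_neg_comm volume reflectionDensity_neg]
  congr 1
  simp only [div_eq_mul_inv]
  ring
end
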